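/- arXiv:2210.15573 — 2 statements merged into one kernel-verified Lean document; each statement's English description precedes it below -/
import Mathlib

section
/- For each task t = 1,…,T, let R_t(θ) = ∫ ℓ(y, f(x,θ)) dp_t(x,y) and let Ĝ : Θ → ℝ be bounded below (the empirical centralized objective). Assume: (i) the uniform deviation bound |∑_{t=1}^T R_t(θ) − Ĝ(θ)| ≤ ζ for all θ ∈ Θ with ζ ≥ 0; (ii) ℓ is M-Lipschitz in the prediction argument: |ℓ(y,a) − ℓ(y,b)| ≤ M·|a − b|; (iii) θ_t* minimizes R_t over Θ for each t, and θ_g* minimizes θ ↦ ∑_{t=1}^T R_t(θ) over Θ. Then |∑_{t=1}^T R_t(θ_t*) − inf_{θ ∈ Θ} Ĝ(θ)| ≤ M·∑_{t=1}^T ∫ |f(x,θ_t*) − f(x,θ_g*)| dp_t(x,y) + ζ. (Deterministic core of Proposition 1, bound (5): the gap between the statistical agnostic optimum P_A* and the empirical centralized optimum P̂_C* is bounded by a bias term plus a variance term.) -/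
open MeasureTheory

/-- Deterministic core of Proposition 1, bound (5): the gap between the statistical
agnostic optimum `P_A* = ∑ t, R t (θs t)` and the empirical centralized optimum
`P̂_C* = ⨅ θ, Ĝ θ` is bounded by a bias term plus a variance term `ζ`. -/
theorem agnostic_vs_empirical_centralized_gap
    {X Y Θ : Type*} [MeasurableSpace X] [MeasurableSpace Y] [Nonempty Θ]
    (T : ℕ) (hT : 1 ≤ T)
    (p : Fin T → Measure (X × Y)) [∀ t, IsProbabilityMeasure (p t)]
    (f : X → Θ → ℝ) (ℓ : Y → ℝ → ℝ) (M : ℝ) (hM : 0 ≤ M)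
    (hfmeas : ∀ θ : Θ, Measurable fun x => f x θ)
    (hLip : ∀ (y : Y) (a b : ℝ), |ℓ y a - ℓ y b| ≤ M * |a - b|)
    (hint : ∀ t (θ : Θ), Integrable (fun z : X × Y => ℓ z.2 (f z.1 θ)) (p t))
    (hintf : ∀ t (θ θ' : Θ), Integrable (fun z : X × Y => |f z.1 θ - f z.1 θ'|) (p t))
    (R : Fin T → Θ → ℝ)
    (hR : ∀ t (θ : Θ), R t θ = ∫ z, ℓ z.2 (f z.1 θ) ∂(p t))
    (Ghat : Θ → ℝ) (hGbdd : BddBelow (Set.range Ghat))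
    (ζ : ℝ) (hζ : 0 ≤ ζ)
    (hdev : ∀ θ : Θ, |(∑ t, R t θ) - Ghat θ| ≤ ζ)
    (θs : Fin T → Θ) (hmin : ∀ t (θ : Θ), R t (θs t) ≤ R t θ)
    (θg : Θ) (hming : ∀ θ : Θ, (∑ t, R t θg) ≤ ∑ t, R t θ) :
    |(∑ t, R t (θs t)) - ⨅ θ : Θ, Ghat θ| ≤
      M * (∑ t, ∫ z, |f z.1 (θs t) - f z.1 θg| ∂(p t)) + ζ := by
  set A := ∑ t, R t (θs t) with hA
  set B := ⨅ θ : Θ, Ghat θ with hB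
  have hS : ∀ t, R t θg - R t (θs t) ≤ M * ∫ z, |f z.1 (θs t) - f z.1 θg| ∂(p t) := by
    intro t
    have hint1 := hint t θg
    have hint2 := hint t (θs t)
    rw [hR t θg, hR t (θs t), ← integral_sub hint1 hint2]
    calc ∫ z, (ℓ z.2 (f z.1 θg) - ℓ z.2 (f z.1 (θs t))) ∂(p t)
        ≤ ∫ z, |ℓ z.2 (f z.1 θg) - ℓ z.2 (f z.1 (θs t))| ∂(p t) := by
          apply integral_mono (hint1.sub hint2) (hint1.sub hint2).abs
          intro z; exact le_abs_self _
      _ ≤ ∫ z, M * |f z.1 (θs t) - f z.1 θg| ∂(p t) := by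
          apply integral_mono (hint1.sub hint2).abs ((hintf t (θs t) θg).const_mul M)
          intro z
          have := hLip z.2 (f z.1 θg) (f z.1 (θs t))
          rwa [abs_sub_comm (f z.1 θg)] at this
      _ = M * ∫ z, |f z.1 (θs t) - f z.1 θg| ∂(p t) := integral_const_mul M _
  have hAle : A ≤ ∑ t, R t θg := Finset.sum_le_sum fun t _ => hmin t θg
  have hgA : ∑ t, R t θg ≤ A + M * (∑ t, ∫ z, |f z.1 (θs t) - f z.1 θg| ∂(p t)) := by
    rw [hA, Finset.mul_sum, ← Finset.sum_add_distrib]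
    apply Finset.sum_le_sum
    intro t _
    have := hS t
    linarith
  have hBle : B ≤ Ghat θg := ciInf_le hGbdd θg
  have hlow : A - ζ ≤ B := by
    apply le_ciInf
    intro θ
    have h1 := hdev θ
    have h2 := hming θ
    have := abs_le.1 h1
    linarith [hAle]
  have hup : B ≤ A + M * (∑ t, ∫ z, |f z.1 (θs t) - f z.1 θg| ∂(p t)) + ζ := by
    have h1 := abs_le.1 (hdev θg)
    linarith
  rw [abs_sub_le_iff]
  constructor <;> linarith
end

section
/- For each task t = 1,…,T, let p_t be a probability measure on X × Y, N_t ≥ 1, and let μ be the product over t of the product measures p_t^{⊗N_t} on Ω = ∏_t (X × Y)^{N_t}. Fix δ ∈ (0,1), ζ ≥ 0 and M ≥ 0. Assume ℓ is M-Lipschitz in the prediction argument, that θ_t* minimizes R_t(θ) = ∫ ℓ(y, f(x,θ)) dp_t over Θ for each t, that θ_g* minimizes θ ↦ ∑_t R_t(θ) over Θ, and the pooled PAC property: the set of sample tuples for which, for all θ ∈ Θ, |∑_{t=1}^T R_t(θ) − (1/∑_t N_t)·∑_{t=1}^T ∑_{i=1}^{N_t} ℓ(y_i^t, f(x_i^t,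 θ))| ≤ ζ contains a measurable set of μ-measure at least 1 − δ. Then the set of sample tuples for which |∑_{t=1}^T R_t(θ_t*) − inf_{θ ∈ Θ} (1/∑_t N_t)·∑_{t=1}^T ∑_{i=1}^{N_t} ℓ(y_i^t, f(x_i^t, θ))| ≤ M·∑_{t=1}^T ∫ |f(x,θ_t*) − f(x,θ_g*)| dp_t + ζ contains a measurable set of μ-measure at least 1 − δ. (Proposition 1, bound (5).) -/
open MeasureTheory

/-- Proposition 1, bound (5): under the pooled PAC property (uniform deviation `ζ`
between the statistical objective `∑ t, R t` and the pooled empirical objective,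
with probability at least `1 - δ` over the product sample measure), the gap between
the statistical agnostic optimum `P_A* = ∑ t, R t (θs t)` and the empirical
centralized optimum is bounded by the bias term plus `ζ`, with probability at
least `1 - δ`. -/
theorem agnostic_vs_empirical_centralized_gap_pac
    {X Y Θ : Type*} [MeasurableSpace X] [MeasurableSpace Y] [Nonempty Θ]
    (T : ℕ) (hT : 1 ≤ T)
    (p : Fin T → Measure (X × Y)) [∀ t, IsProbabilityMeasure (p t)]
    (N : Fin T → ℕ) (hN : ∀ t, 1 ≤ N t)
    (f : X → Θ → ℝ) (ℓ : Y → ℝ → ℝ) (M : ℝ) (hM : 0 ≤ M)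
    (hfmeas : ∀ θ : Θ, Measurable fun x => f x θ)
    (hLip : ∀ (y : Y) (a b : ℝ), |ℓ y a - ℓ y b| ≤ M * |a - b|)
    (hint : ∀ t (θ : Θ), Integrable (fun z : X × Y => ℓ z.2 (f z.1 θ)) (p t))
    (hintf : ∀ t (θ θ' : Θ), Integrable (fun z : X × Y => |f z.1 θ - f z.1 θ'|) (p t))
    (δ : ℝ) (hδ : δ ∈ Set.Ioo (0 : ℝ) 1)
    (ζ : ℝ) (hζ : 0 ≤ ζ)
    (R : Fin T → Θ → ℝ)
    (hR : ∀ t (θ : Θ), R t θ = ∫ z, ℓ z.2 (f z.1 θ) ∂(p t))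
    (θs : Fin T → Θ) (hmin : ∀ t (θ : Θ), R t (θs t) ≤ R t θ)
    (θg : Θ) (hming : ∀ θ : Θ, (∑ t, R t θg) ≤ ∑ t, R t θ)
    (hEmpBdd : ∃ c : ℝ, ∀ (D : ∀ t : Fin T, Fin (N t) → X × Y) (θ : Θ),
      c ≤ (1 / (∑ t, N t : ℝ)) * ∑ t, ∑ i, ℓ (D t i).2 (f (D t i).1 θ))
    (hPAC : ∃ S : Set (∀ t : Fin T, Fin (N t) → X × Y), MeasurableSet S ∧
      ENNReal.ofReal (1 - δ) ≤
        (Measure.pi fun t : Fin T => Measure.pi fun _ : Fin (N t) => p t) S ∧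
      S ⊆ {D | ∀ θ : Θ,
        |(∑ t, R t θ) - (1 / (∑ t, N t : ℝ)) *
          ∑ t, ∑ i, ℓ (D t i).2 (f (D t i).1 θ)| ≤ ζ}) :
    ∃ S : Set (∀ t : Fin T, Fin (N t) → X × Y), MeasurableSet S ∧
      ENNReal.ofReal (1 - δ) ≤
        (Measure.pi fun t : Fin T => Measure.pi fun _ : Fin (N t) => p t) S ∧
      S ⊆ {D | |(∑ t, R t (θs t)) -
        ⨅ θ : Θ, (1 / (∑ t, N t : ℝ)) * ∑ t, ∑ i, ℓ (D t i).2 (f (D t i).1 θ)| ≤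
          M * (∑ t, ∫ z, |f z.1 (θs t) - f z.1 θg| ∂(p t)) + ζ} := by
  obtain ⟨S, hSm, hSμ, hSsub⟩ := hPAC
  obtain ⟨c, hc⟩ := hEmpBdd
  refine ⟨S, hSm, hSμ, ?_⟩
  intro D hD
  have hθall : ∀ θ : Θ,
      |(∑ t, R t θ) - (1 / (∑ t, N t : ℝ)) *
        ∑ t, ∑ i, ℓ (D t i).2 (f (D t i).1 θ)| ≤ ζ := hSsub hD
  set Emp : Θ → ℝ := fun θ => (1 / (∑ t, N t : ℝ)) *
    ∑ t, ∑ i, ℓ (D t i).2 (f (D t i).1 θ) with hEmp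
  set I : ℝ := ∑ t, ∫ z, |f z.1 (θs t) - f z.1 θg| ∂(p t) with hI
  have hInn : 0 ≤ I := Finset.sum_nonneg fun t _ =>
    integral_nonneg fun z => abs_nonneg _
  have hbdd : BddBelow (Set.range Emp) := ⟨c, by rintro _ ⟨θ, rfl⟩; exact hc D θ⟩
  have hgap : ∀ t : Fin T, R t θg ≤ R t (θs t) +
      M * ∫ z, |f z.1 (θs t) - f z.1 θg| ∂(p t) := by
    intro t
    have h1 : R t θg - R t (θs t)
        = ∫ z, (ℓ z.2 (f z.1 θg) - ℓ z.2 (f z.1 (θs t))) ∂(p t) := by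
      rw [hR, hR, integral_sub (hint t θg) (hint t (θs t))]
    have h2 : ∫ z, (ℓ z.2 (f z.1 θg) - ℓ z.2 (f z.1 (θs t))) ∂(p t)
        ≤ ∫ z, M * |f z.1 (θs t) - f z.1 θg| ∂(p t) := by
      apply integral_mono ((hint t θg).sub (hint t (θs t)))
        ((hintf t (θs t) θg).const_mul M)
      intro z
      calc ℓ z.2 (f z.1 θg) - ℓ z.2 (f z.1 (θs t))
          ≤ |ℓ z.2 (f z.1 θg) - ℓ z.2 (f z.1 (θs t))| := le_abs_self _
        _ ≤ M * |f z.1 θg - f z.1 (θs t)| := hLip _ _ _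
        _ = M * |f z.1 (θs t) - f z.1 θg| := by rw [abs_sub_comm]
    rw [integral_const_mul] at h2
    linarith [h1 ▸ h2]
  have hsumgap : (∑ t, R t θg) ≤ (∑ t, R t (θs t)) + M * I := by
    calc (∑ t, R t θg) ≤ ∑ t, (R t (θs t) +
        M * ∫ z, |f z.1 (θs t) - f z.1 θg| ∂(p t)) :=
          Finset.sum_le_sum fun t _ => hgap t
      _ = (∑ t, R t (θs t)) + M * I := by
          rw [Finset.sum_add_distrib, hI, Finset.mul_sum]
  have hlow : (∑ t, R t (θs t)) ≤ ∑ t, R t θg :=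
    Finset.sum_le_sum fun t _ => hmin t θg
  have hinf_le : (⨅ θ : Θ, Emp θ) ≤ (∑ t, R t (θs t)) + M * I + ζ := by
    refine le_trans (ciInf_le hbdd θg) ?_
    have hEq : Emp θg = (1 / (∑ t, N t : ℝ)) *
        ∑ t, ∑ i, ℓ (D t i).2 (f (D t i).1 θg) := rfl
    have := abs_le.mp (hθall θg)
    linarith [this.1]
  have hle_inf : (∑ t, R t (θs t)) - ζ ≤ ⨅ θ : Θ, Emp θ := by
    apply le_ciInf
    intro θ
    have hEq : Emp θ = (1 / (∑ t, N t : ℝ)) *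
        ∑ t, ∑ i, ℓ (D t i).2 (f (D t i).1 θ) := rfl
    have h1 := abs_le.mp (hθall θ)
    have h2 : (∑ t, R t θg) ≤ ∑ t, R t θ := hming θ
    linarith [h1.2]
  rw [Set.mem_setOf_eq, abs_le]
  constructor <;> [skip; skip]
  · linarith
  · linarith
end
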